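/- arXiv:2102.10916 — 2 statements merged into one kernel-verified Lean document; each statement's English description precedes it below -/
import Mathlib

section
/- No metric basis of the hypercube Q_d contains two antipodal vertices; that is, if S is a metric generator of Q_d of minimum cardinality, then S does not contain a pair of vertices differing in all d coordinates. -/
/-- Distance from a vertex `s` to an edge `e` (as an element of `Sym2 V`):
the minimum of the distances from `s` to the two endpoints of `e`. -/
noncomputable def edgeDist {V : Type*} (G : SimpleGraph V) (e : Sym2 V) (s : V) : ℕ :=
  Sym2.lift ⟨fun x y => min (G.dist x s) (G.dist y s), fun _ _ => min_comm _ _⟩ e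

/-- `S` is a metric generator for `G`: every pair of distinct vertices is
distinguished by some element of `S`. -/
def IsMetricGen {V : Type*} (G : SimpleGraph V) (S : Set V) : Prop :=
  ∀ u v : V, u ≠ v → ∃ s ∈ S, G.dist s u ≠ G.dist s v

/-- `S` is an edge metric generator for `G`: every pair of distinct edges is
distinguished by some element of `S`. -/
def IsEdgeMetricGen {V : Type*} (G : SimpleGraph V) (S : Set V) : Prop :=
  ∀ e₁ ∈ G.edgeSet, ∀ e₂ ∈ G.edgeSet, e₁ ≠ e₂ → ∃ s ∈ S, edgeDist G e₁ s ≠ edgeDist G e₂ s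

/-- Distance from a vertex `s` to a mixed element (a vertex or an edge). -/
noncomputable def mixedDist {V : Type*} (G : SimpleGraph V) (a : V ⊕ Sym2 V) (s : V) : ℕ :=
  Sum.elim (fun w => G.dist s w) (fun e => edgeDist G e s) a

/-- A mixed element is valid if it is a vertex, or an actual edge of `G`. -/
def IsMixedElem {V : Type*} (G : SimpleGraph V) (a : V ⊕ Sym2 V) : Prop :=
  Sum.elim (fun _ => True) (fun e => e ∈ G.edgeSet) a

/-- `S` is a mixed metric generator for `G`: every pair of distinct elements of
`V(G) ∪ E(G)` is distinguished by some element of `S`. -/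
def IsMixedMetricGen {V : Type*} (G : SimpleGraph V) (S : Set V) : Prop :=
  ∀ a b : V ⊕ Sym2 V, IsMixedElem G a → IsMixedElem G b → a ≠ b →
    ∃ s ∈ S, mixedDist G a s ≠ mixedDist G b s

/-- The metric dimension: minimum cardinality of a metric generator. -/
noncomputable def metricDim {V : Type*} [Fintype V] (G : SimpleGraph V) : ℕ :=
  sInf {n | ∃ S : Finset V, S.card = n ∧ IsMetricGen G ↑S}

/-- The edge metric dimension: minimum cardinality of an edge metric generator. -/
noncomputable def edgeMetricDim {V : Type*} [Fintype V] (G : SimpleGraph V) : ℕ :=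
  sInf {n | ∃ S : Finset V, S.card = n ∧ IsEdgeMetricGen G ↑S}

/-- The mixed metric dimension: minimum cardinality of a mixed metric generator. -/
noncomputable def mixedMetricDim {V : Type*} [Fintype V] (G : SimpleGraph V) : ℕ :=
  sInf {n | ∃ S : Finset V, S.card = n ∧ IsMixedMetricGen G ↑S}

/-- The hypercube `Q_d`: vertices are binary vectors of length `d`, with two
vertices adjacent iff they differ in exactly one coordinate. -/
def cube (d : ℕ) : SimpleGraph (Fin d → Bool) where
  Adj u v := hammingDist u v = 1
  symm := ⟨fun u v h => by simp only [hammingDist_comm] at h ⊢; exact h⟩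
  loopless := ⟨fun u h => by simp only [hammingDist_self] at h; exact one_ne_zero h.symm⟩

/-! If `a` and `b` are antipodal in `Q_d`, then `d(b, u) = d - d(a, u)` for every vertex `u`,
since graph distance in `Q_d` is Hamming distance. So `b` separates no pair of vertices that `a`
does not already separate, and deleting `b` from a metric generator containing both leaves a
smaller metric generator. -/

open Finset

section Hamming

variable {ι : Type*} [Fintype ι] [DecidableEq ι] {β : ι → Type*} [∀ i, DecidableEq (β i)]

lemma hammingDist_update_self_of_ne (u : ∀ i, β i) {i : ι} {b : β i} (h : u i ≠ b) :
    hammingDist u (Function.update u i b) = 1 := by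
  rw [hammingDist, card_eq_one]
  refine ⟨i, ?_⟩
  ext j
  by_cases hj : j = i
  · subst hj; simp [h]
  · simp [hj]

lemma hammingDist_update_add_one {u v : ∀ i, β i} {i : ι} (h : u i ≠ v i) :
    hammingDist (Function.update u i (v i)) v + 1 = hammingDist u v := by
  have hdiff : ({j | Function.update u i (v i) j ≠ v j} : Finset ι) =
      ({j | u j ≠ v j} : Finset ι).erase i := by
    ext j
    by_cases hj : j = i
    · subst hj; simp
    · simp [hj]
  rw [hammingDist, hdiff, card_erase_add_one (by simpa using h), hammingDist]

end Hamming

lemma hammingDist_add_hammingDist_of_forall_ne {ι : Type*} [Fintype ι] [DecidableEq ι]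
    {a b : ι → Bool} (h : ∀ i, a i ≠ b i) (u : ι → Bool) :
    hammingDist a u + hammingDist b u = Fintype.card ι := by
  have hcompl : ({i | b i ≠ u i} : Finset ι) = ({i | a i ≠ u i} : Finset ι)ᶜ := by
    ext i
    have := h i
    cases ha : a i <;> cases hb : b i <;> cases hu : u i <;> simp_all
  rw [hammingDist, hammingDist, hcompl, card_add_card_compl]

lemma IsMetricGen.diff_singleton {V : Type*} {G : SimpleGraph V} {S : Set V}
    (hS : IsMetricGen G S) {a b : V} (ha : a ∈ S) (hab : a ≠ b) (f : ℕ → ℕ)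
    (hf : ∀ u, G.dist b u = f (G.dist a u)) : IsMetricGen G (S \ {b}) := by
  intro u v huv
  obtain ⟨s, hs, hsuv⟩ := hS u v huv
  by_cases hsb : s = b
  · subst hsb
    refine ⟨a, ⟨ha, hab⟩, fun hauv => hsuv ?_⟩
    rw [hf, hf, hauv]
  · exact ⟨s, ⟨hs, hsb⟩, hsuv⟩

namespace cube

lemma exists_walk_length_eq_hammingDist {d : ℕ} (u v : Fin d → Bool) :
    ∃ p : (cube d).Walk u v, p.length = hammingDist u v := by
  induction h : hammingDist u v generalizing u with
  | zero =>
    obtain rfl := hammingDist_eq_zero.mp h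
    exact ⟨.nil, rfl⟩
  | succ n ih =>
    obtain ⟨i, hi⟩ : ∃ i, u i ≠ v i :=
      Function.ne_iff.mp (hammingDist_ne_zero.mp (by omega))
    have hadj : (cube d).Adj u (Function.update u i (v i)) := hammingDist_update_self_of_ne u hi
    obtain ⟨p, hp⟩ := ih (Function.update u i (v i))
      (by have := hammingDist_update_add_one hi; omega)
    exact ⟨.cons hadj p, by simp [hp]⟩

lemma hammingDist_le_length {d : ℕ} {u v : Fin d → Bool} (p : (cube d).Walk u v) :
    hammingDist u v ≤ p.length := by
  induction p with
  | nil => simp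
  | @cons x y z hxy p ih =>
    have : hammingDist x y = 1 := hxy
    have := hammingDist_triangle x y z
    simp only [SimpleGraph.Walk.length_cons]
    omega

lemma dist_eq_hammingDist {d : ℕ} (u v : Fin d → Bool) :
    (cube d).dist u v = hammingDist u v := by
  obtain ⟨p, hp⟩ := exists_walk_length_eq_hammingDist u v
  obtain ⟨q, hq⟩ := p.reachable.exists_walk_length_eq_dist
  exact le_antisymm (hp ▸ SimpleGraph.dist_le p) (hq ▸ hammingDist_le_length q)

end cube

/-- No metric basis of `Q_d` (metric generator of minimum
cardinality) contains two antipodal vertices. -/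
theorem stmt10 (d : ℕ) (S : Finset (Fin d → Bool))
    (hS : IsMetricGen (cube d) ↑S)
    (hmin : ∀ T : Finset (Fin d → Bool), IsMetricGen (cube d) ↑T → S.card ≤ T.card) :
    ¬ ∃ a ∈ S, ∃ b ∈ S, a ≠ b ∧ ∀ i : Fin d, a i ≠ b i := by
  rintro ⟨a, ha, b, hb, hab, hanti⟩
  have hdist : ∀ u, (cube d).dist b u = d - (cube d).dist a u := fun u => by
    have := hammingDist_add_hammingDist_of_forall_ne hanti u
    simp only [cube.dist_eq_hammingDist, Fintype.card_fin] at this ⊢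
    omega
  have hgen : IsMetricGen (cube d) ↑(S.erase b) := by
    rw [coe_erase]
    exact hS.diff_singleton ha hab _ hdist
  have hcard := hmin _ hgen
  rw [card_erase_of_mem hb] at hcard
  have := card_pos.mpr ⟨b, hb⟩
  omega
end

section
/- For every integer d ≥ 3, the metric dimension and the mixed metric dimension of the hypercube Q_d are equal: dim(Q_d) = mdim(Q_d). -/
/-!
Distances in `Q_d` are Hamming distances, and the edge `{x, x + eᵢ}` lies at distance
`d(s, x) - [sᵢ ≠ xᵢ]` from `s`. Since `d(s, u) + d(s, v) + d(u, v)` is always even, a resolving set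
`S` on which no coordinate is constant already resolves vertices and edges: after choosing the
endpoint `x` of the edge at even distance from the other element, a vertex and an edge that no
`s ∈ S` distinguishes force the coordinate `i` to be constant on `S`, and two such edges force two
vertices, or the vertices `x + eᵢ` and `x + eⱼ` with `i ≠ j`, to be unresolved.

Any resolving set can be given this property without changing its size by complementing the
vectors of a subset `A ⊆ S` that is not of the form `{s ∈ S | sₗ = b}`; complementation keeps `S`
resolving because `d(sᶜ, u) = d - d(s, u)`. For `d ≥ 3` such an `A` exists: otherwise, for
distinct `s₀, t₀, u₀ ∈ S`, flipping `u₀` in the coordinates cutting out `{s₀}` and `{t₀}`, or in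
those cutting out `{s₀, t₀}` and `S`, gives two vertices that `S` does not resolve.
-/

open Finset Function

section FlipOn

variable {ι : Type*} [DecidableEq ι]

def flipOn (D : Finset ι) (w : ι → Bool) : ι → Bool := fun k => if k ∈ D then !w k else w k

@[simp] lemma flipOn_apply (D : Finset ι) (w : ι → Bool) (k : ι) :
    flipOn D w k = if k ∈ D then !w k else w k := rfl

lemma flipOn_flipOn (D : Finset ι) (w : ι → Bool) : flipOn D (flipOn D w) = w := by
  ext k; by_cases hk : k ∈ D <;> simp [hk]

lemma flipOn_left_injective (w : ι → Bool) : Injective (flipOn · w) := by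
  intro D D' h
  ext k
  have := congrFun h k
  by_cases hk : k ∈ D <;> by_cases hk' : k ∈ D' <;> simp_all

end FlipOn

section Hamming

variable {ι : Type*} [Fintype ι]

lemma hammingDist_eq_sum {β : Type*} [DecidableEq β] (x y : ι → β) :
    hammingDist x y = ∑ k, if x k ≠ y k then 1 else 0 :=
  card_filter _ _

lemma even_hammingDist_add (s u v : ι → Bool) :
    Even (hammingDist s u + hammingDist s v + hammingDist u v) := by
  simp only [hammingDist_eq_sum, ← sum_add_distrib]
  refine even_sum _ fun k _ => ?_
  cases s k <;> cases u k <;> cases v k <;> decide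

lemma hammingDist_compl_add (s u : ι → Bool) :
    hammingDist sᶜ u + hammingDist s u = Fintype.card ι := by
  simp only [hammingDist_eq_sum, ← sum_add_distrib]
  rw [← card_univ, card_eq_sum_ones]
  refine sum_congr rfl fun k _ => ?_
  cases hs : s k <;> cases u k <;> simp [hs]

variable [DecidableEq ι]

lemma hammingDist_flipOn (s w : ι → Bool) (D : Finset ι) :
    (hammingDist s (flipOn D w) : ℤ) =
      hammingDist s w + ∑ k ∈ D, if s k = w k then 1 else -1 := by
  have hterm (k : ι) : (if s k ≠ flipOn D w k then 1 else 0 : ℤ) =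
      (if s k ≠ w k then 1 else 0) + if k ∈ D then (if s k = w k then 1 else -1) else 0 := by
    by_cases hk : k ∈ D <;> cases s k <;> cases hw : w k <;> simp [hk, hw]
  simp only [hammingDist_eq_sum, Nat.cast_sum, Nat.cast_ite, Nat.cast_one, Nat.cast_zero, hterm,
    sum_add_distrib, sum_ite_mem, univ_inter]

lemma hammingDist_flipOn_self (w : ι → Bool) (D : Finset ι) :
    hammingDist w (flipOn D w) = #D := by
  have := hammingDist_flipOn w w D
  simp only [hammingDist_self, if_true, sum_const, nsmul_eq_mul, mul_one] at this
  omega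

lemma flipOn_filter_ne (x y : ι → Bool) : flipOn {k | x k ≠ y k} x = y := by
  ext k; by_cases h : x k = y k <;> cases hx : x k <;> simp_all

end Hamming

section Cube

variable {d : ℕ}

lemma exists_walk_length_eq_hammingDist (u v : Fin d → Bool) :
    ∃ p : (cube d).Walk u v, p.length = hammingDist u v := by
  induction h : hammingDist u v generalizing u with
  | zero =>
    obtain rfl := eq_of_hammingDist_eq_zero h
    exact ⟨.nil, rfl⟩
  | succ n ih =>
    obtain ⟨i, hi⟩ := Function.ne_iff.1 (hammingDist_ne_zero.1 (by omega) : u ≠ v)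
    have hadj : (cube d).Adj u (flipOn {i} u) := by
      simp only [cube, hammingDist_flipOn_self, card_singleton]
    have hstep := hammingDist_flipOn v u {i}
    simp only [sum_singleton, if_neg (Ne.symm hi), hammingDist_comm v] at hstep
    obtain ⟨p, hp⟩ := ih (flipOn {i} u) (by omega)
    exact ⟨.cons hadj p, by simp [hp]⟩

lemma hammingDist_le_walk_length {u v : Fin d → Bool} (p : (cube d).Walk u v) :
    hammingDist u v ≤ p.length := by
  induction p with
  | nil => simp
  | @cons a b c hadj p ih =>
    have hab : hammingDist a b = 1 := hadj
    have htri := hammingDist_triangle a b c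
    simp only [SimpleGraph.Walk.length_cons]
    omega

lemma cube_dist (u v : Fin d → Bool) : (cube d).dist u v = hammingDist u v := by
  obtain ⟨p, hp⟩ := exists_walk_length_eq_hammingDist u v
  obtain ⟨q, hq⟩ := SimpleGraph.Reachable.exists_walk_length_eq_dist ⟨p⟩
  exact le_antisymm (hp ▸ SimpleGraph.dist_le p) (hq ▸ hammingDist_le_walk_length q)

lemma isMetricGen_cube_iff {S : Set (Fin d → Bool)} :
    IsMetricGen (cube d) S ↔ ∀ u v, u ≠ v → ∃ s ∈ S, hammingDist s u ≠ hammingDist s v := by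
  simp only [IsMetricGen, cube_dist]

lemma exists_eq_flipOn_singleton_of_adj {x y : Fin d → Bool} (h : (cube d).Adj x y) :
    ∃ i, y = flipOn {i} x := by
  obtain ⟨i, hi⟩ := card_eq_one.1 (h : hammingDist x y = 1)
  exact ⟨i, by rw [← hi, flipOn_filter_ne]⟩

lemma edgeDist_cube_add_ite (x s : Fin d → Bool) (i : Fin d) :
    edgeDist (cube d) s(x, flipOn {i} x) s + (if s i = x i then 0 else 1) = hammingDist s x := by
  change min ((cube d).dist x s) ((cube d).dist (flipOn {i} x) s) + _ = _
  have := hammingDist_flipOn s x {i}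
  rw [sum_singleton] at this
  rw [cube_dist, cube_dist, hammingDist_comm x, hammingDist_comm (flipOn {i} x)]
  split_ifs at * <;> omega

lemma exists_eq_flipOn_even_hammingDist {e : Sym2 (Fin d → Bool)} (he : e ∈ (cube d).edgeSet)
    (w : Fin d → Bool) : ∃ x i, e = s(x, flipOn {i} x) ∧ Even (hammingDist w x) := by
  induction e with | _ x y =>
  obtain ⟨i, rfl⟩ := exists_eq_flipOn_singleton_of_adj ((SimpleGraph.mem_edgeSet _).1 he)
  by_cases hx : Even (hammingDist w x)
  · exact ⟨x, i, rfl, hx⟩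
  · refine ⟨flipOn {i} x, i, by rw [flipOn_flipOn, Sym2.eq_swap], ?_⟩
    have := hammingDist_flipOn w x {i}
    rw [sum_singleton] at this
    rw [Nat.not_even_iff] at hx
    rw [Nat.even_iff]
    split_ifs at this <;> omega

lemma coord_eq_of_hammingDist_eq_edgeDist {s w x : Fin d → Bool} {i : Fin d}
    (hx : Even (hammingDist w x)) (h : hammingDist s w = edgeDist (cube d) s(x, flipOn {i} x) s) :
    s i = x i := by
  have hedge := edgeDist_cube_add_ite x s i
  have hpar := even_hammingDist_add s w x
  rw [Nat.even_iff] at hx hpar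
  split_ifs at hedge with hsx
  · exact hsx
  · omega

lemma hammingDist_eq_and_iff_of_edgeDist_eq {s x z : Fin d → Bool} {i j : Fin d}
    (hxz : Even (hammingDist z x))
    (h : edgeDist (cube d) s(x, flipOn {i} x) s = edgeDist (cube d) s(z, flipOn {j} z) s) :
    hammingDist s x = hammingDist s z ∧ (s i = x i ↔ s j = z j) := by
  have hx := edgeDist_cube_add_ite x s i
  have hz := edgeDist_cube_add_ite z s j
  have hpar := even_hammingDist_add s z x
  rw [Nat.even_iff] at hxz hpar
  split_ifs at hx hz with hsx hsz hsz
  · exact ⟨by omega, iff_of_true hsx hsz⟩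
  · omega
  · omega
  · exact ⟨by omega, iff_of_false hsx hsz⟩

lemma exists_sum_ne_of_isMetricGen {S : Set (Fin d → Bool)} (hS : IsMetricGen (cube d) S)
    (w : Fin d → Bool) {D D' : Finset (Fin d)} (hD : D ≠ D') :
    ∃ s ∈ S, ∑ k ∈ D, (if s k = w k then 1 else -1 : ℤ) ≠
      ∑ k ∈ D', if s k = w k then 1 else -1 := by
  obtain ⟨s, hs, hne⟩ := hS _ _ ((flipOn_left_injective w).ne hD)
  rw [cube_dist, cube_dist] at hne
  refine ⟨s, hs, fun hsum => hne ?_⟩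
  have := hammingDist_flipOn s w D
  have := hammingDist_flipOn s w D'
  omega

lemma exists_not_iff_of_isMetricGen {S : Set (Fin d → Bool)} (hS : IsMetricGen (cube d) S)
    (w : Fin d → Bool) {i j : Fin d} (hij : i ≠ j) : ∃ s ∈ S, ¬(s i = w i ↔ s j = w j) := by
  obtain ⟨s, hs, hne⟩ := exists_sum_ne_of_isMetricGen hS w (singleton_inj.not.2 hij)
  rw [sum_singleton, sum_singleton] at hne
  exact ⟨s, hs, fun h => hne (by simp only [h])⟩

lemma not_isMetricGen_of_subset_pair (hd : 3 ≤ d) {S : Set (Fin d → Bool)} {a b : Fin d → Bool}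
    (hab : S ⊆ {a, b}) : ¬IsMetricGen (cube d) S := by
  intro hS
  obtain ⟨i, j, hij, hcol⟩ :=
    Fintype.exists_ne_map_eq_of_card_lt (fun k => a k == b k) (by simp; omega)
  obtain ⟨s, hs, hne⟩ := exists_not_iff_of_isMetricGen hS a hij
  rcases hab hs with rfl | rfl
  · exact hne (iff_of_true rfl rfl)
  · apply hne
    simpa [eq_comm] using hcol

lemma three_le_card_of_isMetricGen (hd : 3 ≤ d) {S : Finset (Fin d → Bool)}
    (hS : IsMetricGen (cube d) ↑S) : 3 ≤ #S := by
  by_contra! hlt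
  obtain ⟨a, b, hab⟩ : ∃ a b : Fin d → Bool, S ⊆ {a, b} := by
    interval_cases h : #S
    · exact ⟨default, default, by simp [card_eq_zero.1 h]⟩
    · obtain ⟨a, rfl⟩ := card_eq_one.1 h
      exact ⟨a, a, by simp⟩
    · obtain ⟨a, b, -, rfl⟩ := card_eq_two.1 h
      exact ⟨a, b, Subset.rfl⟩
  exact not_isMetricGen_of_subset_pair hd (by rw [← coe_pair, coe_subset]; exact hab) hS

lemma exists_sign_add_ne_of_isMetricGen {S : Set (Fin d → Bool)} (hS : IsMetricGen (cube d) S)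
    (w : Fin d → Bool) {i j k l : Fin d} (hij : i ≠ j) (hkl : k ≠ l) (hik : i ≠ k) (hil : i ≠ l) :
    ∃ s ∈ S, (if s i = w i then 1 else -1 : ℤ) + (if s j = w j then 1 else -1) ≠
      (if s k = w k then 1 else -1) + (if s l = w l then 1 else -1) := by
  have hD : ({i, j} : Finset (Fin d)) ≠ {k, l} := fun h => by
    simpa [hik, hil] using (Finset.ext_iff.1 h i).1
  obtain ⟨s, hs, hne⟩ := exists_sum_ne_of_isMetricGen hS w hD
  rw [sum_pair hij, sum_pair hkl] at hne
  exact ⟨s, hs, hne⟩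

lemma exists_subset_ne_filter_of_isMetricGen (hd : 3 ≤ d) {S : Finset (Fin d → Bool)}
    (hS : IsMetricGen (cube d) ↑S) : ∃ A ⊆ S, ∀ l b, A ≠ S.filter (· l = b) := by
  by_contra! hslice
  have slice (A) (hA : A ⊆ S) : ∃ l b, ∀ s ∈ S, s l = if s ∈ A then b else !b := by
    obtain ⟨l, b, rfl⟩ := hslice A hA
    refine ⟨l, b, fun s hs => ?_⟩
    by_cases h : s l = b <;> simp [hs, h, Bool.eq_not_iff]
  obtain ⟨s₀, t₀, u₀, hs₀, ht₀, hu₀, hst, hsu, htu⟩ :=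
    two_lt_card_iff.1 (three_le_card_of_isMetricGen hd hS)
  obtain ⟨l₁, b₁, h₁⟩ := slice {s₀} (by simpa)
  obtain ⟨l₂, b₂, h₂⟩ := slice {t₀} (by simpa)
  obtain ⟨l₃, b₃, h₃⟩ := slice {s₀, t₀} (by simp [insert_subset_iff, *])
  obtain ⟨l₄, b₄, h₄⟩ := slice S Subset.rfl
  have col₁ : s₀ l₁ = b₁ ∧ t₀ l₁ = !b₁ ∧ u₀ l₁ = !b₁ := by
    simp [h₁ _ hs₀, h₁ _ ht₀, h₁ _ hu₀, hst.symm, hsu.symm]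
  have col₂ : s₀ l₂ = !b₂ ∧ t₀ l₂ = b₂ ∧ u₀ l₂ = !b₂ := by
    simp [h₂ _ hs₀, h₂ _ ht₀, h₂ _ hu₀, hst, htu.symm]
  have col₃ : s₀ l₃ = b₃ ∧ t₀ l₃ = b₃ ∧ u₀ l₃ = !b₃ := by
    simp [h₃ _ hs₀, h₃ _ ht₀, h₃ _ hu₀, hsu.symm, htu.symm]
  have col₄ : s₀ l₄ = b₄ ∧ t₀ l₄ = b₄ ∧ u₀ l₄ = b₄ := by
    simp [h₄ _ hs₀, h₄ _ ht₀, h₄ _ hu₀, hs₀, ht₀, hu₀]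
  have h₁₂ : l₁ ≠ l₂ := by rintro rfl; cases b₁ <;> cases b₂ <;> simp_all
  have h₁₃ : l₁ ≠ l₃ := by rintro rfl; cases b₁ <;> cases b₃ <;> simp_all
  have h₁₄ : l₁ ≠ l₄ := by rintro rfl; cases b₁ <;> cases b₄ <;> simp_all
  have h₃₄ : l₃ ≠ l₄ := by rintro rfl; cases b₃ <;> cases b₄ <;> simp_all
  obtain ⟨s, hs : s ∈ S, hne⟩ := exists_sign_add_ne_of_isMetricGen hS u₀ h₁₂ h₃₄ h₁₃ h₁₄
  -- Each `s ∈ S` agrees with `u₀` in as many of the coordinates `l₁, l₂` as of `l₃, l₄`.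
  apply hne
  rw [h₁ s hs, h₂ s hs, h₃ s hs, h₄ s hs, h₁ u₀ hu₀, h₂ u₀ hu₀, h₃ u₀ hu₀, h₄ u₀ hu₀]
  by_cases hss : s = s₀
  · subst hss; simp [hs, hu₀, hsu.symm, htu.symm, hst]
  by_cases hst' : s = t₀
  · subst hst'; simp [hs, hu₀, hsu.symm, htu.symm, hst.symm]
  · simp [hs, hu₀, hsu.symm, htu.symm, hss, hst']

lemma isMetricGen_image_compl {S : Finset (Fin d → Bool)} (hS : IsMetricGen (cube d) ↑S)
    (A : Finset (Fin d → Bool)) :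
    IsMetricGen (cube d) ↑(S.image fun s => if s ∈ A then sᶜ else s) := by
  intro u v huv
  obtain ⟨s, hs, hne⟩ := hS u v huv
  refine ⟨_, mem_image_of_mem _ hs, ?_⟩
  rw [cube_dist, cube_dist] at hne ⊢
  split_ifs
  · have := hammingDist_compl_add s u
    have := hammingDist_compl_add s v
    omega
  · exact hne

lemma exists_ne_of_image_compl {S A : Finset (Fin d → Bool)} (hAS : A ⊆ S)
    (hA : ∀ l b, A ≠ S.filter (· l = b)) (l : Fin d) :
    ∃ s ∈ S.image (fun s => if s ∈ A then sᶜ else s),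
      ∃ t ∈ S.image (fun s => if s ∈ A then sᶜ else s), s l ≠ t l := by
  by_contra! hconst
  obtain ⟨s₁, hs₁⟩ : S.Nonempty := by
    by_contra! hS
    subst hS
    exact hA l true (by simpa using hAS)
  set c := (if s₁ ∈ A then s₁ᶜ else s₁) l
  have hc (s) (hs : s ∈ S) : (if s ∈ A then sᶜ else s) l = c :=
    hconst _ (mem_image_of_mem _ hs) _ (mem_image_of_mem _ hs₁)
  apply hA l !c
  ext s
  by_cases hs : s ∈ S
  · have := hc s hs
    by_cases hsA : s ∈ A <;> simp_all [← this]
  · simpa [hs] using fun h => hs (hAS h)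

lemma exists_hammingDist_ne_edgeDist {S : Set (Fin d → Bool)}
    (hsplit : ∀ i, ∃ s ∈ S, ∃ t ∈ S, s i ≠ t i) {e : Sym2 (Fin d → Bool)}
    (he : e ∈ (cube d).edgeSet) (w : Fin d → Bool) :
    ∃ s ∈ S, hammingDist s w ≠ edgeDist (cube d) e s := by
  obtain ⟨x, i, rfl, hx⟩ := exists_eq_flipOn_even_hammingDist he w
  obtain ⟨s, hs, t, ht, hst⟩ := hsplit i
  by_contra! h
  exact hst ((coord_eq_of_hammingDist_eq_edgeDist hx (h s hs)).trans
    (coord_eq_of_hammingDist_eq_edgeDist hx (h t ht)).symm)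

lemma exists_edgeDist_ne {S : Set (Fin d → Bool)} (hS : IsMetricGen (cube d) S)
    {e f : Sym2 (Fin d → Bool)} (he : e ∈ (cube d).edgeSet) (hf : f ∈ (cube d).edgeSet)
    (hef : e ≠ f) : ∃ s ∈ S, edgeDist (cube d) e s ≠ edgeDist (cube d) f s := by
  obtain ⟨z, j, rfl, -⟩ := exists_eq_flipOn_even_hammingDist hf default
  obtain ⟨x, i, rfl, hxz⟩ := exists_eq_flipOn_even_hammingDist he z
  by_contra! h
  have key s (hs : s ∈ S) := hammingDist_eq_and_iff_of_edgeDist_eq hxz (h s hs)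
  obtain rfl : x = z := by
    by_contra hne
    obtain ⟨s, hs, hs'⟩ := isMetricGen_cube_iff.1 hS x z hne
    exact hs' (key s hs).1
  obtain rfl | hij := eq_or_ne i j
  · exact hef rfl
  · obtain ⟨s, hs, hs'⟩ := exists_not_iff_of_isMetricGen hS x hij
    exact hs' (key s hs).2

theorem isMixedMetricGen_cube {S : Set (Fin d → Bool)} (hS : IsMetricGen (cube d) S)
    (hsplit : ∀ i, ∃ s ∈ S, ∃ t ∈ S, s i ≠ t i) : IsMixedMetricGen (cube d) S := by
  rintro (u | e) (v | f) he hf hne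
  · exact hS u v fun h => hne (h ▸ rfl)
  · obtain ⟨s, hs, h⟩ := exists_hammingDist_ne_edgeDist hsplit hf u
    exact ⟨s, hs, by simpa [mixedDist, cube_dist] using h⟩
  · obtain ⟨s, hs, h⟩ := exists_hammingDist_ne_edgeDist hsplit he v
    exact ⟨s, hs, by simpa [mixedDist, cube_dist, eq_comm] using h⟩
  · exact exists_edgeDist_ne hS he hf fun h => hne (h ▸ rfl)

lemma exists_card_le_isMixedMetricGen_cube (hd : 3 ≤ d) (S : Finset (Fin d → Bool))
    (hS : IsMetricGen (cube d) ↑S) :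
    ∃ T : Finset (Fin d → Bool), #T ≤ #S ∧ IsMixedMetricGen (cube d) ↑T := by
  obtain ⟨A, hAS, hA⟩ := exists_subset_ne_filter_of_isMetricGen hd hS
  refine ⟨_, card_image_le, isMixedMetricGen_cube (isMetricGen_image_compl hS A) ?_⟩
  exact_mod_cast exists_ne_of_image_compl hAS hA

lemma isMetricGen_cube_univ : IsMetricGen (cube d) ↑(univ : Finset (Fin d → Bool)) :=
  isMetricGen_cube_iff.2 fun u v huv =>
    ⟨u, mem_coe.2 (mem_univ u), by rw [hammingDist_self]; exact (hammingDist_pos.2 huv).ne⟩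

end Cube

section Dimension

variable {V : Type*} {G : SimpleGraph V}

lemma IsMixedMetricGen.isMetricGen {S : Set V} (h : IsMixedMetricGen G S) : IsMetricGen G S :=
  fun u v huv => h (.inl u) (.inl v) trivial trivial fun h => huv (Sum.inl_injective h)

variable [Fintype V]

lemma metricDim_le_mixedMetricDim (h : ∃ S : Finset V, IsMixedMetricGen G ↑S) :
    metricDim G ≤ mixedMetricDim G := by
  obtain ⟨S, hS⟩ := h
  obtain ⟨T, hT, hTmix⟩ : mixedMetricDim G ∈ {n | ∃ S : Finset V, #S = n ∧ IsMixedMetricGen G ↑S} :=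
    Nat.sInf_mem ⟨_, S, rfl, hS⟩
  exact hT ▸ Nat.sInf_le ⟨T, rfl, hTmix.isMetricGen⟩

lemma mixedMetricDim_le_metricDim (h : ∃ S : Finset V, IsMetricGen G ↑S)
    (hmix : ∀ S : Finset V, IsMetricGen G ↑S → ∃ T : Finset V, #T ≤ #S ∧ IsMixedMetricGen G ↑T) :
    mixedMetricDim G ≤ metricDim G := by
  obtain ⟨S, hS⟩ := h
  obtain ⟨S', hS', hS'gen⟩ : metricDim G ∈ {n | ∃ S : Finset V, #S = n ∧ IsMetricGen G ↑S} :=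
    Nat.sInf_mem ⟨_, S, rfl, hS⟩
  obtain ⟨T, hTS, hT⟩ := hmix S' hS'gen
  exact (Nat.sInf_le ⟨T, rfl, hT⟩ : mixedMetricDim G ≤ #T).trans (hS' ▸ hTS)

end Dimension

/-- For every `d ≥ 3`, `dim(Q_d) = mdim(Q_d)`. -/
theorem stmt17 (d : ℕ) (hd : 3 ≤ d) :
    metricDim (cube d) = mixedMetricDim (cube d) := by
  have hmix := exists_card_le_isMixedMetricGen_cube hd
  obtain ⟨T, -, hT⟩ := hmix univ isMetricGen_cube_univ
  exact le_antisymm (metricDim_le_mixedMetricDim ⟨T, hT⟩)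
    (mixedMetricDim_le_metricDim ⟨univ, isMetricGen_cube_univ⟩ hmix)
end
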